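/- There exists an entire function f : ℂ → ℂ which is not a polynomial such that for every algebraic number α ∈ ℂ and every natural number s ≥ 0, the value f^(s)(α) lies in ℚ(i), i.e., f^(s)(α) = p + q·i for some rational numbers p and q. -/

import Mathlib

/-!
List the pairs (order, algebraic point) as (s k, z k) so that a point recurs only with larger
orders, and put H k = (X - z k) ^ s k * ∏ (X - z i) ^ (s i + 1), the product over the earlier
i with z i ≠ z k. Then H_j^(s k)(z k) vanishes for k < j and not for k = j, so the
coefficients c k of F = ∑ c k H k can be chosen one at a time so that the partial sums have a
prescribed (s k)-th derivative at z k from step k on. That value only has to lie in a dense set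
(here the nonzero elements of ℚ(i)), which leaves room to make |c k H k| ≤ 2⁻ᵏ on the disc of
radius k. The series then converges locally uniformly, so F is entire, its derivatives are the
limits of those of the partial sums, and F is no polynomial because none of its derivatives
vanishes identically.
-/

open Polynomial Filter Finset Metric Function

noncomputable section

namespace Polynomial

variable {R : Type*} [CommRing R]

theorem eval_iterate_derivative_X_sub_C_pow_mul_of_lt (b : R) (u : R[X]) {n m : ℕ} (h : n < m) :
    eval b (derivative^[n] ((X - C b) ^ m * u)) = 0 := by
  rw [iterate_derivative_mul, eval_finsetSum]
  refine Finset.sum_eq_zero fun k _ => ?_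
  have : m - (n - k) ≠ 0 := by omega
  simp [iterate_derivative_X_sub_pow, zero_pow this]

theorem eval_iterate_derivative_X_sub_C_pow_mul_self (b : R) (u : R[X]) (m : ℕ) :
    eval b (derivative^[m] ((X - C b) ^ m * u)) = m.factorial * eval b u := by
  rw [iterate_derivative_mul, eval_finsetSum, Finset.sum_eq_single 0]
  · simp [iterate_derivative_X_sub_pow_self]
  · intro k hk hk0
    have : m - (m - k) = k := by have := mem_range.mp hk; omega
    simp [iterate_derivative_X_sub_pow, this, zero_pow hk0]
  · simp

theorem iteratedDeriv_eval {𝕜 : Type*} [NontriviallyNormedField 𝕜] (p : 𝕜[X]) (n : ℕ) :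
    iteratedDeriv n (fun x => p.eval x) = fun x => (derivative^[n] p).eval x := by
  induction n generalizing p with
  | zero => simp
  | succ n ih =>
    rw [iteratedDeriv_succ', iterate_succ_apply, ← ih]
    congr 1
    ext x
    exact p.deriv

end Polynomial

theorem TendstoLocallyUniformly.iteratedDeriv {ι E : Type*} [NormedAddCommGroup E]
    [NormedSpace ℂ E] [CompleteSpace E] {l : Filter ι} {f : ι → ℂ → E} {g : ℂ → E}
    (h : TendstoLocallyUniformly f g l) (hf : ∀ i, Differentiable ℂ (f i)) (n : ℕ) :
    TendstoLocallyUniformly (fun i => iteratedDeriv n (f i)) (iteratedDeriv n g) l := by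
  induction n with
  | zero => simpa
  | succ n ih =>
    simp only [iteratedDeriv_succ]
    rw [← tendstoLocallyUniformlyOn_univ] at ih ⊢
    refine ih.deriv (Eventually.of_forall fun i => ?_) isOpen_univ
    exact ((hf i).contDiff.differentiable_iteratedDeriv n
      (WithTop.coe_lt_top _)).differentiableOn

theorem tendstoLocallyUniformly_sum_range_of_norm_le {E F : Type*} [NormedAddCommGroup E]
    [ProperSpace E] [NormedAddCommGroup F] [CompleteSpace F] {f : ℕ → E → F} {u : ℕ → ℝ}
    (hu : Summable u) (hf : ∀ n : ℕ, ∀ x ∈ closedBall (0 : E) n, ‖f n x‖ ≤ u n) :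
    TendstoLocallyUniformly (fun N x => ∑ n ∈ range N, f n x) (fun x => ∑' n, f n x)
      atTop := by
  rw [tendstoLocallyUniformly_iff_forall_isCompact]
  intro K hK
  obtain ⟨r, hr⟩ := hK.isBounded.subset_closedBall 0
  have hfK : ∀ᶠ n in cofinite, ∀ x ∈ K, ‖f n x‖ ≤ u n := by
    rw [Nat.cofinite_eq_atTop]
    filter_upwards [eventually_ge_atTop ⌈r⌉₊] with n hn x hx
    exact hf n x (closedBall_subset_closedBall (Nat.ceil_le.mp hn) (hr hx))
  exact fun v hv => tendsto_finset_range.eventually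
    (tendstoUniformlyOn_tsum_of_cofinite_eventually hu hfK v hv)

namespace HermiteSeries

section Algebra

variable {K : Type*} [Field K] [DecidableEq K] (s : ℕ → ℕ) (z : ℕ → K)

def basis (k : ℕ) : K[X] :=
  (X - C (z k)) ^ s k * ∏ i ∈ (range k).filter (z · ≠ z k), (X - C (z i)) ^ (s i + 1)

def basisDeriv (j k : ℕ) : K := (derivative^[s k] (basis s z j)).eval (z k)

variable {s z}

theorem basisDeriv_eq_zero_of_lt (hsz : ∀ ⦃i j⦄, i < j → z i = z j → s i < s j) {j k : ℕ}
    (hkj : k < j) : basisDeriv s z j k = 0 := by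
  unfold basisDeriv basis
  by_cases hz : z k = z j
  · rw [← hz]
    exact eval_iterate_derivative_X_sub_C_pow_mul_of_lt _ _ (hsz hkj hz)
  · have hk : k ∈ (range j).filter (z · ≠ z j) := by simp [hkj, hz]
    rw [← Finset.mul_prod_erase _ _ hk, mul_left_comm]
    exact eval_iterate_derivative_X_sub_C_pow_mul_of_lt _ _ (Nat.lt_succ_self _)

variable (s z) in
theorem basisDeriv_self_ne_zero [CharZero K] (k : ℕ) : basisDeriv s z k k ≠ 0 := by
  rw [basisDeriv, basis, eval_iterate_derivative_X_sub_C_pow_mul_self, eval_prod]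
  refine mul_ne_zero (Nat.cast_ne_zero.mpr (Nat.factorial_ne_zero _)) ?_
  refine prod_ne_zero_iff.mpr fun i hi => ?_
  simpa [sub_eq_zero] using (mem_filter.mp hi).2.symm

variable (s z) in
/-- Chosen so that the first `k + 1` terms of `∑ c j * basis s z j` have `(s k)`-th derivative
`target k w` at `z k`, where `w` is the contribution of the first `k` terms. -/
def coeff (target : ℕ → K → K) : ℕ → K
  | k =>
    let w := ∑ j ∈ (range k).attach, coeff target j * basisDeriv s z j k
    (target k w - w) / basisDeriv s z k k
  decreasing_by exact mem_range.mp j.2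

variable (s z) in
def partialValue (target : ℕ → K → K) (k : ℕ) : K :=
  ∑ j ∈ range k, coeff s z target j * basisDeriv s z j k

variable (target : ℕ → K → K)

theorem coeff_eq (k : ℕ) :
    coeff s z target k = (target k (partialValue s z target k) - partialValue s z target k) /
      basisDeriv s z k k := by
  rw [coeff, sum_attach (range k) (fun j => coeff s z target j * basisDeriv s z j k)]
  rfl

theorem sum_range_succ_coeff_mul_basisDeriv [CharZero K] (k : ℕ) :
    ∑ j ∈ range (k + 1), coeff s z target j * basisDeriv s z j k =
      target k (partialValue s z target k) := by
  rw [sum_range_succ, coeff_eq, div_mul_cancel₀ _ (basisDeriv_self_ne_zero s z k)]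
  exact add_sub_cancel _ _

end Algebra

section Complex

variable {s : ℕ → ℕ} {z : ℕ → ℂ}

theorem norm_coeff_le (target : ℕ → ℂ → ℂ) (k : ℕ) {ε : ℝ}
    (h : ∀ w, ‖target k w - w‖ ≤ ε * ‖basisDeriv s z k k‖) : ‖coeff s z target k‖ ≤ ε := by
  rw [coeff_eq, norm_div, div_le_iff₀ (norm_pos_iff.mpr (basisDeriv_self_ne_zero s z k))]
  exact h _

variable (s z) in
def partialSum (c : ℕ → ℂ) (N : ℕ) : ℂ[X] := ∑ j ∈ range N, C (c j) * basis s z j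

variable (s z) in
def series (c : ℕ → ℂ) (x : ℂ) : ℂ := ∑' j, c j * (basis s z j).eval x

variable {c : ℕ → ℂ} {u : ℕ → ℝ}

theorem eval_iterate_derivative_partialSum (N k : ℕ) :
    (derivative^[s k] (partialSum s z c N)).eval (z k) =
      ∑ j ∈ range N, c j * basisDeriv s z j k := by
  simp only [partialSum, iterate_derivative_sum, iterate_derivative_C_mul, eval_finsetSum,
    eval_mul, eval_C, basisDeriv]

theorem tendstoLocallyUniformly_partialSum (hu : Summable u)
    (hcu : ∀ k : ℕ, ∀ x ∈ closedBall (0 : ℂ) k, ‖c k * (basis s z k).eval x‖ ≤ u k) :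
    TendstoLocallyUniformly (fun N x => (partialSum s z c N).eval x) (series s z c) atTop := by
  convert tendstoLocallyUniformly_sum_range_of_norm_le hu hcu using 2 with N x
  · simp only [partialSum, eval_finsetSum, eval_mul, eval_C]
  · rfl

theorem differentiable_series (hu : Summable u)
    (hcu : ∀ k : ℕ, ∀ x ∈ closedBall (0 : ℂ) k, ‖c k * (basis s z k).eval x‖ ≤ u k) :
    Differentiable ℂ (series s z c) := by
  rw [← differentiableOn_univ]
  exact (tendstoLocallyUniformlyOn_univ.mpr (tendstoLocallyUniformly_partialSum hu hcu))
    |>.differentiableOn (Eventually.of_forall fun N => (partialSum s z c N).differentiableOn)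
      isOpen_univ

theorem iteratedDeriv_series (hsz : ∀ ⦃i j⦄, i < j → z i = z j → s i < s j) (hu : Summable u)
    (hcu : ∀ k : ℕ, ∀ x ∈ closedBall (0 : ℂ) k, ‖c k * (basis s z k).eval x‖ ≤ u k) (k : ℕ) :
    iteratedDeriv (s k) (series s z c) (z k) =
      ∑ j ∈ range (k + 1), c j * basisDeriv s z j k := by
  have hlim := (tendstoLocallyUniformly_partialSum hu hcu).iteratedDeriv
    (fun N => (partialSum s z c N).differentiable) (s k)
  refine tendsto_nhds_unique
    ((tendstoLocallyUniformlyOn_univ.mpr hlim).tendsto_at (Set.mem_univ (z k)))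
    (tendsto_const_nhds.congr' ?_)
  filter_upwards [eventually_gt_atTop k] with N hN
  rw [iteratedDeriv_eval]
  dsimp only
  rw [eval_iterate_derivative_partialSum]
  refine sum_subset (range_subset_range.mpr hN) fun j _ hj => ?_
  rw [basisDeriv_eq_zero_of_lt hsz (by simpa using hj), mul_zero]

theorem exists_differentiable_iteratedDeriv_mem {D : Set ℂ} (hD : Dense D)
    (hsz : ∀ ⦃i j⦄, i < j → z i = z j → s i < s j) :
    ∃ F : ℂ → ℂ, Differentiable ℂ F ∧ ∀ k, iteratedDeriv (s k) F (z k) ∈ D := by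
  obtain ⟨M, hM_pos, hM⟩ : ∃ M : ℕ → ℝ, (∀ k, 0 < M k) ∧
      ∀ k : ℕ, ∀ x ∈ closedBall (0 : ℂ) k, ‖(basis s z k).eval x‖ ≤ M k := by
    choose M hM using fun k : ℕ => (isCompact_closedBall (0 : ℂ) k).exists_bound_of_continuousOn
      (basis s z k).continuous.continuousOn
    exact ⟨fun k => max (M k) 1, fun k => by positivity,
      fun k x hx => (hM k x hx).trans (le_max_left _ _)⟩
  set ε : ℕ → ℝ := fun k => (1 / 2) ^ k / M k
  have hε : ∀ k, 0 < ε k * ‖basisDeriv s z k k‖ := fun k => by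
    have := basisDeriv_self_ne_zero s z k
    have := hM_pos k
    positivity
  choose target htarget_mem htarget_dist using fun k w => hD.exists_dist_lt w (hε k)
  have hcu : ∀ k : ℕ, ∀ x ∈ closedBall (0 : ℂ) k,
      ‖coeff s z target k * (basis s z k).eval x‖ ≤ (1 / 2) ^ k := fun k x hx => by
    have hc : ‖coeff s z target k‖ ≤ ε k := norm_coeff_le target k fun w => by
      rw [← dist_eq_norm, dist_comm]
      exact (htarget_dist k w).le
    calc ‖coeff s z target k * (basis s z k).eval x‖ ≤ ε k * M k :=
          norm_mul_le_of_le hc (hM k x hx)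
      _ = (1 / 2) ^ k := div_mul_cancel₀ _ (hM_pos k).ne'
  refine ⟨series s z (coeff s z target), differentiable_series summable_geometric_two hcu,
    fun k => ?_⟩
  rw [iteratedDeriv_series hsz summable_geometric_two hcu, sum_range_succ_coeff_mul_basisDeriv]
  exact htarget_mem _ _

end Complex

end HermiteSeries

open HermiteSeries in
theorem exists_differentiable_iteratedDeriv_mem_of_injective {D : Set ℂ} (hD : Dense D)
    {a : ℕ → ℂ} (ha : Injective a) :
    ∃ F : ℂ → ℂ, Differentiable ℂ F ∧ ∀ m n, iteratedDeriv n F (a m) ∈ D := by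
  obtain ⟨F, hF, hFD⟩ := exists_differentiable_iteratedDeriv_mem (s := fun k => k.unpair.1)
    (z := fun k => a k.unpair.2) hD fun i j hij hz => by
      have hmono : StrictMono fun b => Nat.pair b i.unpair.2 :=
        fun _ _ => Nat.pair_lt_pair_left _
      refine hmono.lt_iff_lt.mp ?_
      show Nat.pair _ _ < Nat.pair _ _
      rwa [Nat.pair_unpair, ha hz, Nat.pair_unpair]
  exact ⟨F, hF, fun m n => by simpa using hFD (Nat.pair n m)⟩

theorem Complex.denseRange_ratCast_add_ratCast_mul_I :
    DenseRange fun pq : ℚ × ℚ => (pq.1 : ℂ) + pq.2 * Complex.I := by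
  have := Complex.equivRealProdCLM.symm.surjective.denseRange.comp
    (Rat.denseRange_cast.prodMap Rat.denseRange_cast) Complex.equivRealProdCLM.symm.continuous
  convert this using 2 with pq
  simp [Complex.equivRealProdCLM_symm_apply]

theorem Set.Countable.exists_injective_nat_range_eq {α : Type*} {S : Set α} (hc : S.Countable)
    (hi : S.Infinite) :
    ∃ a : ℕ → α, Injective a ∧ Set.range a = S := by
  obtain ⟨_⟩ := Set.countable_infinite_iff_nonempty_denumerable.mp ⟨hc, hi⟩
  exact ⟨Subtype.val ∘ (Denumerable.eqv S).symm,
    Subtype.val_injective.comp (Denumerable.eqv S).symm.injective,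
    (Denumerable.eqv S).symm.surjective.range_comp _ |>.trans Subtype.range_coe⟩

end

theorem stmt_12 :
    ∃ f : ℂ → ℂ, Differentiable ℂ f ∧
      (∀ p : Polynomial ℂ, f ≠ fun z => p.eval z) ∧
      ∀ α : ℂ, IsAlgebraic ℚ α → ∀ s : ℕ,
        ∃ p q : ℚ, iteratedDeriv s f α = (p : ℂ) + (q : ℂ) * Complex.I := by
  obtain ⟨a, ha_inj, ha_range⟩ :=
    (Algebraic.countable ℚ ℂ).exists_injective_nat_range_eq (Algebraic.infinite_of_charZero ℚ ℂ)
  obtain ⟨F, hF, hFD⟩ := exists_differentiable_iteratedDeriv_mem_of_injective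
    (Complex.denseRange_ratCast_add_ratCast_mul_I.sdiff_singleton 0) ha_inj
  refine ⟨F, hF, fun p hp => ?_, fun α hα s => ?_⟩
  · have := (hFD 0 (p.natDegree + 1)).2
    rw [hp, Polynomial.iteratedDeriv_eval, iterate_derivative_eq_zero (Nat.lt_succ_self _)] at this
    exact this eval_zero
  · obtain ⟨m, rfl⟩ : α ∈ Set.range a := ha_range ▸ hα
    obtain ⟨⟨⟨p, q⟩, hpq⟩, -⟩ := hFD m s
    exact ⟨p, q, hpq.symm⟩
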